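/- Let r ≥ 1, e ≥ 2 and s ∈ ℤ^r. If two r-multipartitions λ and μ satisfy (λ, s) ≈_e (μ, s) (i.e., they lie in the same block), then Ψ_r(λ, s) ≈_e Ψ_r(μ, s); that is, the Uglov map Ψ_r sends blocks into blocks. -/

import Mathlib

/-- A partition: a weakly decreasing sequence of non-negative integers,
eventually zero.  `part i` is the `(i+1)`-st part `λ_{i+1}`. -/
structure PartitionSeq where
  part : ℕ → ℕ
  antitone : ∀ i j : ℕ, i ≤ j → part j ≤ part i
  eventually_zero : ∃ N : ℕ, ∀ i : ℕ, N ≤ i → part i = 0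

/-- The empty partition. -/
def zeroPart : PartitionSeq := ⟨fun _ => 0, fun _ _ _ => le_rfl, ⟨0, fun _ _ => rfl⟩⟩

/-- A β-set: a set of integers containing all sufficiently small integers and
excluding all sufficiently large ones. -/
def IsBetaSet (B : Set ℤ) : Prop :=
  (∃ N : ℤ, ∀ z : ℤ, z < N → z ∈ B) ∧ (∃ M : ℤ, ∀ z : ℤ, M < z → z ∉ B)

/-- The β-set `B_s(λ) = {λ_i - i + s : i ≥ 1}`. -/
def betaSet (lam : PartitionSeq) (s : ℤ) : Set ℤ :=
  {b : ℤ | ∃ i : ℕ, b = (lam.part i : ℤ) - ((i : ℤ) + 1) + s}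

/-- `|λ|`, the sum of the parts of a partition. -/
noncomputable def psize (lam : PartitionSeq) : ℕ := ∑ᶠ i, lam.part i

/-- The pair `(λ, s)` corresponding to a β-set (junk value if none exists). -/
noncomputable def partOfBeta (B : Set ℤ) : PartitionSeq × ℤ :=
  letI := Classical.propDecidable (∃ p : PartitionSeq × ℤ, betaSet p.1 p.2 = B)
  if h : ∃ p : PartitionSeq × ℤ, betaSet p.1 p.2 = B then h.choose else (zeroPart, 0)

/-- The β-set `C_i` of runner `i`: the rows `m` with a bead at position `m*e+i`. -/
def quotSetB (e : ℕ) (B : Set ℤ) (i : ℕ) : Set ℤ :=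
  {m : ℤ | m * (e : ℤ) + (i : ℤ) ∈ B}

/-- `ρ_i`: the `i`-th component of the `e`-quotient of the configuration `B`. -/
noncomputable def rhoB (e : ℕ) (B : Set ℤ) (i : ℕ) : PartitionSeq :=
  (partOfBeta (quotSetB e B i)).1

/-- `t_i`: the charge of runner `i` of the configuration `B`. -/
noncomputable def tB (e : ℕ) (B : Set ℤ) (i : ℕ) : ℤ :=
  (partOfBeta (quotSetB e B i)).2

/-- `|ρ| = Σ_i |ρ_i|`, the size of the `e`-quotient of `B`. -/
noncomputable def wtB (e : ℕ) (B : Set ℤ) : ℕ :=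
  ∑ i ∈ Finset.range e, psize (rhoB e B i)

/-- `B` is a (`c`-shifted) Rouquier configuration: `wt ≤ t_{i+1} - t_i + c`
for all `0 ≤ i < e-1`.  `c = 1` gives Rouquier, `c = r` gives `r`-Rouquier. -/
def IsRouquierB (e : ℕ) (B : Set ℤ) (c : ℤ) : Prop :=
  ∀ i : ℕ, i + 1 < e → (wtB e B : ℤ) ≤ tB e B (i + 1) - tB e B i + c

/-- Uglov's map `ψ_k`: sends `me + i` (with `0 ≤ i < e`) to `((m+1)r - k)e + i`. -/
def psi (e r k x : ℤ) : ℤ := ((Int.ediv x e + 1) * r - k) * e + Int.emod x e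

/-- Uglov's map `Ψ_r` on β-sets: `⨆_{k=1}^r ψ_k(B_k)`. -/
def uglovSet (e r : ℕ) (B : Fin r → Set ℤ) : Set ℤ :=
  ⋃ k : Fin r, psi (e : ℤ) (r : ℤ) (((k : ℕ) : ℤ) + 1) '' B k

/-- The number of nodes of the Young diagram of `λ` with `e`-residue `j`
(for charge `0`). -/
noncomputable def resCount (e : ℕ) (lam : PartitionSeq) (j : ZMod e) : ℕ :=
  {p : ℕ × ℕ | p.2 < lam.part p.1 ∧ ((p.2 : ZMod e) - (p.1 : ZMod e) = j)}.ncard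

/-- The block relation `λ ∼_e μ` for partitions: equal size and equal
multisets of `e`-residues. -/
def SimE (e : ℕ) (lam mu : PartitionSeq) : Prop :=
  psize lam = psize mu ∧ ∀ j : ZMod e, resCount e lam j = resCount e mu j

/-- The number of nodes of the Young diagram of a multipartition with
`e`-residue `j`, for the multicharge `s`. -/
noncomputable def mresCount (e : ℕ) {r : ℕ} (lam : Fin r → PartitionSeq)
    (s : Fin r → ℤ) (j : ZMod e) : ℕ :=
  ∑ k : Fin r, {p : ℕ × ℕ |
    p.2 < (lam k).part p.1 ∧ ((s k : ZMod e) + (p.2 : ZMod e) - (p.1 : ZMod e) = j)}.ncard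

/-- The block relation `(λ, s) ≈_e (μ, s)` for multipartitions with the same
multicharge: equal size and equal multisets of `e`-residues. -/
def MSimE (e : ℕ) {r : ℕ} (lam mu : Fin r → PartitionSeq) (s : Fin r → ℤ) : Prop :=
  (∑ k, psize (lam k)) = (∑ k, psize (mu k)) ∧
    ∀ j : ZMod e, mresCount e lam s j = mresCount e mu s j

/-- The `e`-core abacus configuration of `B`: all beads pushed up on their
runners. -/
noncomputable def eCoreSet (e : ℕ) (B : Set ℤ) : Set ℤ :=
  {b : ℤ | ∃ i : ℕ, i < e ∧ ∃ m : ℤ, m < tB e B i ∧ b = m * (e : ℤ) + (i : ℤ)}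

/-- The `e`-core of `λ` (computed via the abacus with charge `s`). -/
noncomputable def eCore (e : ℕ) (lam : PartitionSeq) (s : ℤ) : PartitionSeq :=
  (partOfBeta (eCoreSet e (betaSet lam s))).1

/-- The `e`-weight of `λ`: `(|λ| - |e-core(λ)|)/e`. -/
noncomputable def eWeight (e : ℕ) (lam : PartitionSeq) (s : ℤ) : ℤ :=
  ((psize lam : ℤ) - (psize (eCore e lam s) : ℤ)) / (e : ℤ)

/-- Replace the bead at position `b` by a bead at position `c`. -/
def replaceBead (S : Set ℤ) (b c : ℤ) : Set ℤ := insert c (S \ {b})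

/-- Perform two bead replacements, `b₁ ↦ c₁` in component `k₁` and then
`b₂ ↦ c₂` in component `k₂`. -/
def twoBeadUpdate {ι : Type*} [DecidableEq ι] (B : ι → Set ℤ)
    (k₁ : ι) (b₁ c₁ : ℤ) (k₂ : ι) (b₂ c₂ : ℤ) : ι → Set ℤ :=
  Function.update (Function.update B k₁ (replaceBead (B k₁) b₁ c₁)) k₂
    (replaceBead (Function.update B k₁ (replaceBead (B k₁) b₁ c₁) k₂) b₂ c₂)

/-- Type-1 move at level `N`: decrease a β-number by `N` in component `k₁`
and increase a β-number by `N` in component `k₂`. -/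
def Move1 {ι : Type*} [DecidableEq ι] (N : ℤ) (B B' : ι → Set ℤ) : Prop :=
  ∃ k₁ k₂ : ι, ∃ b₁ b₂ : ℤ,
    b₁ ∈ B k₁ ∧ b₁ - N ∉ B k₁ ∧ b₂ ∈ B k₂ ∧ b₂ + N ∉ B k₂ ∧
    B' = twoBeadUpdate B k₁ b₁ (b₁ - N) k₂ b₂ (b₂ + N)

/-- Type-2 move at level `N`: for `b₁ ≡ b₂ (mod N)` and `h > 0`, replace `b₁`
by `b₁ + h` in component `k₁` and `b₂ + h` by `b₂` in component `k₂`. -/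
def Move2 {ι : Type*} [DecidableEq ι] (N : ℤ) (B B' : ι → Set ℤ) : Prop :=
  ∃ k₁ k₂ : ι, ∃ b₁ b₂ h : ℤ, 0 < h ∧ ((N : ℤ) ∣ b₁ - b₂) ∧
    b₁ ∈ B k₁ ∧ b₁ + h ∉ B k₁ ∧ b₂ ∉ B k₂ ∧ b₂ + h ∈ B k₂ ∧
    B' = twoBeadUpdate B k₁ b₁ (b₁ + h) k₂ (b₂ + h) b₂

/-- The block relation on tuples of abacus configurations: the reflexive
transitive closure of type-1 and type-2 moves at level `N`. -/
def BlockEq {ι : Type*} [DecidableEq ι] (N : ℤ) (B B' : ι → Set ℤ) : Prop :=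
  Relation.ReflTransGen (fun X Y => Move1 N X Y ∨ Move2 N X Y) B B'

/-- The stretching operation on a single abacus configuration: shift the
content of runner `i` by `M i`, leaving the `e`-quotient unchanged. -/
def strSet (e : ℕ) (M : ℕ → ℤ) (B : Set ℤ) : Set ℤ :=
  {b : ℤ | ∃ i : ℕ, i < e ∧ ∃ m : ℤ, m * (e : ℤ) + (i : ℤ) ∈ B ∧
    b = (m + M i) * (e : ℤ) + (i : ℤ)}

/-!
Write the β-numbers of `(λ, s)` as `β_x = λ_x - x - 1 + s`, so that `λ = ∅` gives `s - 1 - x`.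
For `F : ℤ → ℤ`, the finite sum `Σ_x (F β_x - F (s - 1 - x))` is `|λ|` for `F = id` and the
number of nodes of residue `J` for `F = ⌊(· - J) / e⌋`, since row `x` contributes the
contents in `(s - 1 - x, β_x]`. Block equivalence of `(λ, s)` and `(μ, s)` says exactly that
these sums, added over the components, agree.

Uglov's map is `ψ_k b = b + e ((r - 1) ⌊b / e⌋ + r - k)`, so for both kinds of `F` the
composite `F ∘ ψ_k` is `F + α ⌊· / e⌋` up to a constant. The images of the `ψ_k` are disjoint
and `ψ_k b ≥ r e L ↔ b ≥ e L`, so a window `[r e L, ∞)` of `Ψ_r(λ, s)` is the disjoint union of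
the `ψ_k`-images of the windows `[e L, ∞)` of the components. For `L` small enough, the sum for
`Ψ_r(λ, s)` and `F` is therefore the sum over the components for `F + α ⌊· / e⌋` plus a term that
depends only on `s`. Counting the beads in the window shows that `Ψ_r(λ, s)` has charge `Σ_k s_k`.
-/

open Filter Set

def betaNum (lam : PartitionSeq) (s : ℤ) (x : ℕ) : ℤ := lam.part x - (x + 1) + s

namespace PartitionSeq

variable (lam : PartitionSeq) (s : ℤ)

lemma betaSet_eq_range : betaSet lam s = range (betaNum lam s) := by
  ext b
  exact exists_congr fun _ => eq_comm

lemma betaNum_strictAnti : StrictAnti (betaNum lam s) :=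
  strictAnti_nat_of_succ_lt fun x => by
    have := lam.antitone x (x + 1) x.le_succ
    simp only [betaNum]
    push_cast
    omega

lemma betaNum_zeroPart (x : ℕ) : betaNum zeroPart s x = s - 1 - x := by
  simp only [betaNum, zeroPart]
  ring

variable {lam s}

lemma betaNum_eq_zeroPart {T x : ℕ} (hT : ∀ y, T ≤ y → lam.part y = 0) (hx : T ≤ x) :
    betaNum lam s x = betaNum zeroPart s x := by
  simp only [betaNum, hT x hx, zeroPart]

lemma betaSet_subset_Iic : betaSet lam s ⊆ Iic (betaNum lam s 0) := by
  rw [betaSet_eq_range]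
  rintro _ ⟨x, rfl⟩
  exact (betaNum_strictAnti lam s).antitone x.zero_le

lemma Iio_subset_betaSet {T : ℕ} (hT : ∀ y, T ≤ y → lam.part y = 0) :
    Iio (s - T) ⊆ betaSet lam s := by
  intro b (hb : b < s - T)
  rw [betaSet_eq_range]
  refine ⟨(s - 1 - b).toNat, ?_⟩
  rw [betaNum_eq_zeroPart hT (by omega), betaNum_zeroPart]
  omega

lemma betaSet_inter_Ici {T : ℕ} (hT : ∀ y, T ≤ y → lam.part y = 0) {a : ℤ} (ha : a ≤ s - T) :
    betaSet lam s ∩ Ici a = betaNum lam s '' Iio (s - a).toNat := by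
  rw [betaSet_eq_range]
  ext b
  simp only [mem_inter_iff, mem_range, mem_Ici, mem_image, mem_Iio]
  constructor
  · rintro ⟨⟨x, rfl⟩, hx⟩
    refine ⟨x, ?_, rfl⟩
    by_contra! hNx
    rw [betaNum_eq_zeroPart hT (by omega), betaNum_zeroPart] at hx
    omega
  · rintro ⟨x, hx, rfl⟩
    refine ⟨⟨x, rfl⟩, ?_⟩
    have : (0 : ℤ) ≤ lam.part x := by positivity
    simp only [betaNum]
    omega

lemma finsum_mem_betaSet_inter_Ici {T : ℕ} (hT : ∀ y, T ≤ y → lam.part y = 0) {a : ℤ}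
    (ha : a ≤ s - T) (F : ℤ → ℤ) :
    ∑ᶠ b ∈ betaSet lam s ∩ Ici a, F b = ∑ x ∈ Finset.range (s - a).toNat, F (betaNum lam s x) := by
  rw [betaSet_inter_Ici hT ha, finsum_mem_image (betaNum_strictAnti lam s).injective.injOn,
    ← Finset.coe_range, finsum_mem_coe_finset]

variable (lam s) in
lemma finite_betaSet_inter_Ici (a : ℤ) : (betaSet lam s ∩ Ici a).Finite :=
  (finite_Icc a (betaNum lam s 0)).subset fun _ hb => ⟨hb.2, betaSet_subset_Iic hb.1⟩

variable (lam s) in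
lemma isBetaSet_betaSet : IsBetaSet (betaSet lam s) := by
  obtain ⟨T, hT⟩ := lam.eventually_zero
  exact ⟨⟨s - T, fun z hz => Iio_subset_betaSet hT hz⟩,
    ⟨betaNum lam s 0, fun z hz hmem => (betaSet_subset_Iic hmem).not_gt hz⟩⟩

end PartitionSeq

lemma exists_betaSet_eq_range {f : ℕ → ℤ} (hf : StrictAnti f) {n₀ : ℕ}
    (hconst : ∀ n, n₀ ≤ n → f (n + 1) + 1 = f n) :
    ∃ p : PartitionSeq × ℤ, betaSet p.1 p.2 = range f := by
  set g : ℕ → ℤ := fun n => f n + n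
  have hg : Antitone g := antitone_nat_of_succ_le fun n => by
    have := hf (lt_add_one n)
    simp only [g]
    push_cast
    omega
  have hg₀ : ∀ n, n₀ ≤ n → g n = g n₀ := fun n hn => by
    induction n, hn using Nat.le_induction with
    | base => rfl
    | succ n hn ih =>
      have := hconst n hn
      simp only [g] at ih ⊢
      push_cast
      omega
  have hle : ∀ n, g n₀ ≤ g n := fun n => (le_total n n₀).elim (fun h => hg h) fun h => (hg₀ n h).ge
  refine ⟨⟨⟨fun n => (g n - g n₀).toNat, fun i j hij => Int.toNat_le_toNat (by linarith [hg hij]),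
    ⟨n₀, fun n hn => by simp [hg₀ n hn]⟩⟩, g n₀ + 1⟩, ?_⟩
  rw [PartitionSeq.betaSet_eq_range]
  congr 1
  funext n
  have := hle n
  simp only [betaNum, g] at this ⊢
  omega

namespace IsBetaSet

variable {B : Set ℤ}

lemma exists_strictAnti_range_eq (hB : IsBetaSet B) :
    ∃ f : ℕ → ℤ, StrictAnti f ∧ range f = B ∧ ∃ n₀, ∀ n, n₀ ≤ n → f (n + 1) + 1 = f n := by
  classical
  obtain ⟨⟨N, hN⟩, ⟨M, hM⟩⟩ := hB
  -- `nth p` enumerates `M - B ⊆ ℕ` increasingly, so `M - nth p` enumerates `B` decreasingly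
  set p : ℕ → Prop := fun n => M - n ∈ B
  have hp : ∀ n : ℕ, M - N < n → p n := fun n hn => hN _ (by omega)
  have hinf : (Set.ofPred p).Infinite := infinite_of_forall_exists_gt fun a =>
    ⟨max a (M - N).toNat + 1, hp _ (by omega), by omega⟩
  refine ⟨fun n => M - Nat.nth p n, fun a b hab => by simpa using Nat.nth_strictMono hinf hab,
    ?_, (M - N).toNat + 1, fun n hn => ?_⟩
  · ext b
    constructor
    · rintro ⟨n, rfl⟩
      exact Nat.nth_mem_of_infinite hinf n
    · intro hb
      have hbM : b ≤ M := not_lt.1 fun h => hM b h hb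
      obtain ⟨n, hn⟩ : (M - b).toNat ∈ range (Nat.nth p) := by
        rw [Nat.range_nth_of_infinite hinf]
        show M - _ ∈ B
        rwa [Int.toNat_of_nonneg (by omega), sub_sub_cancel]
      exact ⟨n, by simp only [hn]; omega⟩
  · have hle : n ≤ Nat.nth p n := (Nat.nth_strictMono hinf).id_le n
    have hsucc : p (Nat.nth p n + 1) := hp _ (by omega)
    have : Nat.nth p (n + 1) = Nat.nth p n + 1 := by
      rw [← Nat.nth_count hsucc, Nat.count_succ_eq_succ_count (Nat.nth_mem_of_infinite hinf n),
        Nat.count_nth_of_infinite hinf]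
    simp only [this]
    push_cast
    ring

lemma exists_betaSet_eq (hB : IsBetaSet B) : ∃ p : PartitionSeq × ℤ, betaSet p.1 p.2 = B := by
  obtain ⟨f, hf, rfl, n₀, hconst⟩ := hB.exists_strictAnti_range_eq
  exact exists_betaSet_eq_range hf hconst

lemma betaSet_partOfBeta (hB : IsBetaSet B) : betaSet (partOfBeta B).1 (partOfBeta B).2 = B := by
  unfold partOfBeta
  rw [dif_pos hB.exists_betaSet_eq]
  exact hB.exists_betaSet_eq.choose_spec

end IsBetaSet

section Psi

variable {e r K b : ℤ}

lemma psi_eq (e r K b : ℤ) : psi e r K b = b + e * ((r - 1) * (b / e) + (r - K)) := by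
  show ((b / e + 1) * r - K) * e + b % e = _
  linear_combination Int.emod_add_mul_ediv b e

lemma psi_sub_ediv (he : e ≠ 0) (J : ℤ) :
    (psi e r K b - J) / e = (b - J) / e + (r - 1) * (b / e) + (r - K) := by
  rw [psi_eq, add_sub_right_comm, Int.add_mul_ediv_left _ _ he, add_assoc]

lemma psi_ediv (he : e ≠ 0) : psi e r K b / e = r * (b / e) + (r - K) := by
  rw [psi_eq, Int.add_mul_ediv_left _ _ he]
  ring

lemma psi_strictMono (he : 0 < e) (hr : 1 ≤ r) : StrictMono (psi e r K) := fun b b' hbb' => by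
  have h₁ := Int.ediv_le_ediv he hbb'.le
  have h₂ : 0 ≤ e * (r - 1) := by nlinarith
  rw [psi_eq, psi_eq]
  nlinarith

lemma mul_le_psi_iff (he : 0 < e) (hK : 1 ≤ K) (hKr : K ≤ r) {L : ℤ} :
    r * e * L ≤ psi e r K b ↔ e * L ≤ b := by
  rw [mul_comm e, ← Int.le_ediv_iff_mul_le he, show r * e * L = r * L * e by ring,
    ← Int.le_ediv_iff_mul_le he, psi_ediv he.ne']
  constructor
  · intro h
    by_contra! h'
    nlinarith
  · intro h
    nlinarith

lemma eq_of_psi_eq (he : 0 < e) {K' b' : ℤ} (hK : 1 ≤ K) (hKr : K ≤ r) (hK' : 1 ≤ K')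
    (hK'r : K' ≤ r) (h : psi e r K b = psi e r K' b') : K = K' := by
  have h' := congrArg (· / e) h
  simp only [psi_ediv he.ne'] at h'
  rcases lt_trichotomy (b / e) (b' / e) with hlt | heq | hgt
  · nlinarith
  · rw [heq] at h'
    linarith
  · nlinarith

lemma exists_psi_eq (he : 0 < e) (hr : 0 < r) (z : ℤ) :
    ∃ K, 1 ≤ K ∧ K ≤ r ∧ ∃ b, psi e r K b = z := by
  have h₁ := Int.emod_nonneg (z / e) hr.ne'
  have h₂ := Int.emod_lt_of_pos (z / e) hr
  refine ⟨r - z / e % r, by omega, by omega, z / e / r * e + z % e, ?_⟩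
  have hq : (z / e / r * e + z % e) / e = z / e / r := by
    rw [add_comm, Int.add_mul_ediv_right _ _ he.ne',
      Int.ediv_eq_zero_of_lt (Int.emod_nonneg _ he.ne') (Int.emod_lt_of_pos _ he), zero_add]
  rw [psi_eq, hq]
  linear_combination Int.emod_add_mul_ediv z e + e * Int.emod_add_mul_ediv (z / e) r

end Psi

lemma Int.tendsto_const_mul_atBot {c : ℤ} (hc : 0 < c) : Tendsto (c * ·) atBot atBot :=
  tendsto_atBot_atBot.2 fun b => ⟨min b 0, fun a ha => by
    nlinarith [min_le_left b 0, min_le_right b 0]⟩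

section Uglov

variable {e r : ℕ} {B : Fin r → Set ℤ}

lemma mem_uglovSet {z : ℤ} :
    z ∈ uglovSet e r B ↔ ∃ k : Fin r, ∃ b ∈ B k, psi e r ((k : ℕ) + 1) b = z := by
  simp only [uglovSet, mem_iUnion, mem_image]

lemma one_le_fin_val_add_one (k : Fin r) : 1 ≤ ((k : ℕ) : ℤ) + 1 := by omega

lemma fin_val_add_one_le (k : Fin r) : ((k : ℕ) : ℤ) + 1 ≤ r := by omega

lemma uglovSet_inter_Ici (he : 0 < e) (L : ℤ) :
    uglovSet e r B ∩ Ici (r * e * L) =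
      ⋃ k : Fin r, psi e r ((k : ℕ) + 1) '' (B k ∩ Ici (e * L)) := by
  have he' : (0 : ℤ) < e := by exact_mod_cast he
  ext z
  simp only [mem_inter_iff, mem_uglovSet, mem_Ici, mem_iUnion, mem_image]
  constructor
  · rintro ⟨⟨k, b, hb, rfl⟩, hz⟩
    exact ⟨k, b, ⟨hb, (mul_le_psi_iff he' (one_le_fin_val_add_one k) (fin_val_add_one_le k)).1 hz⟩,
      rfl⟩
  · rintro ⟨k, b, ⟨hb, hbL⟩, rfl⟩
    exact ⟨⟨k, b, hb, rfl⟩,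
      (mul_le_psi_iff he' (one_le_fin_val_add_one k) (fin_val_add_one_le k)).2 hbL⟩

lemma isBetaSet_uglovSet (he : 0 < e) (hr : 0 < r) (hB : ∀ k, IsBetaSet (B k)) :
    IsBetaSet (uglovSet e r B) := by
  choose N hN using fun k => (hB k).1
  choose M hM using fun k => (hB k).2
  have he' : (0 : ℤ) < e := by exact_mod_cast he
  obtain ⟨L, hL⟩ := ((Int.tendsto_const_mul_atBot he').eventually
    (eventually_all.2 fun k => eventually_le_atBot (N k))).exists
  obtain ⟨L', hL'⟩ := ((tendsto_id.const_mul_atTop' he').eventually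
    (eventually_all.2 fun k => eventually_gt_atTop (M k))).exists
  refine ⟨⟨r * e * L, fun z hz => ?_⟩, ⟨r * e * L', fun z hz hmem => ?_⟩⟩
  · obtain ⟨K, hK, hKr, b, rfl⟩ := exists_psi_eq (r := r) he' (by exact_mod_cast hr) z
    have hb : b < e * L := lt_of_not_ge fun h => hz.not_ge ((mul_le_psi_iff he' hK hKr).2 h)
    let k : Fin r := ⟨(K - 1).toNat, by omega⟩
    have hk : ((k : ℕ) : ℤ) + 1 = K := by simp only [k]; omega
    exact mem_uglovSet.2 ⟨k, b, hN k b (hb.trans_le (hL k)), by rw [hk]⟩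
  · obtain ⟨k, b, hb, rfl⟩ := mem_uglovSet.1 hmem
    have hbL : b < e * L' := lt_of_not_ge fun h => hM k b ((hL' k).trans_le h) hb
    exact (mul_le_psi_iff he' (one_le_fin_val_add_one k) (fin_val_add_one_le k)).not.2
      hbL.not_ge hz.le

lemma finsum_mem_uglovSet_inter_Ici (he : 0 < e) {L : ℤ} (hB : ∀ k, (B k ∩ Ici (e * L)).Finite)
    (G : ℤ → ℤ) :
    ∑ᶠ u ∈ uglovSet e r B ∩ Ici (r * e * L), G u =
      ∑ k : Fin r, ∑ᶠ b ∈ B k ∩ Ici (e * L), G (psi e r ((k : ℕ) + 1) b) := by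
  have he' : (0 : ℤ) < e := by exact_mod_cast he
  have hdisj : Pairwise (Function.onFun Disjoint
      fun k : Fin r => psi e r ((k : ℕ) + 1) '' (B k ∩ Ici (e * L))) := by
    intro k k' hkk'
    rw [Function.onFun, disjoint_left]
    rintro _ ⟨b, -, rfl⟩ ⟨b', -, h⟩
    have := eq_of_psi_eq he' (one_le_fin_val_add_one k') (fin_val_add_one_le k')
      (one_le_fin_val_add_one k) (fin_val_add_one_le k) h
    exact hkk' (Fin.ext (by omega))
  rw [uglovSet_inter_Ici he, finsum_mem_iUnion hdisj fun k => (hB k).image _,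
    finsum_eq_sum_of_fintype]
  refine Finset.sum_congr rfl fun k _ => finsum_mem_image ?_
  exact (psi_strictMono he' (by linarith [fin_val_add_one_le k])).injective.injOn

end Uglov

noncomputable def betaSum (F : ℤ → ℤ) (lam : PartitionSeq) (s : ℤ) : ℤ :=
  ∑ᶠ x, (F (betaNum lam s x) - F (betaNum zeroPart s x))

namespace PartitionSeq

variable {lam : PartitionSeq} {s : ℤ}

lemma betaSum_eq_sum {T : ℕ} (hT : ∀ y, T ≤ y → lam.part y = 0) (F : ℤ → ℤ) :
    betaSum F lam s = ∑ x ∈ Finset.range T, (F (betaNum lam s x) - F (betaNum zeroPart s x)) :=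
  finsum_eq_sum_of_support_subset _ fun x hx => by
    simp only [Function.mem_support, Finset.coe_range, mem_Iio] at hx ⊢
    by_contra! h
    exact hx (by rw [betaNum_eq_zeroPart hT h, sub_self])

lemma betaSum_affine {F G H : ℤ → ℤ} (α c : ℤ) (hH : ∀ b, H b = G b + α * F b + c) :
    betaSum H lam s = betaSum G lam s + α * betaSum F lam s := by
  obtain ⟨T, hT⟩ := lam.eventually_zero
  simp only [betaSum_eq_sum hT, hH, Finset.mul_sum, ← Finset.sum_add_distrib]
  exact Finset.sum_congr rfl fun _ _ => by ring

variable (lam s)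

lemma eventually_betaSum_eq (F : ℤ → ℤ) :
    ∀ᶠ a in atBot, betaSum F lam s =
      ∑ᶠ b ∈ betaSet lam s ∩ Ici a, F b - ∑ᶠ b ∈ betaSet zeroPart s ∩ Ici a, F b := by
  obtain ⟨T, hT⟩ := lam.eventually_zero
  filter_upwards [eventually_le_atBot (s - T)] with a ha
  rw [finsum_mem_betaSet_inter_Ici hT ha, finsum_mem_betaSet_inter_Ici (T := 0) (fun _ _ => rfl)
    (by omega), betaSum_eq_sum (T := (s - a).toNat) (fun y hy => hT y (by omega)),
    Finset.sum_sub_distrib]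

lemma eventually_finsum_mem_one :
    ∀ᶠ a in atBot, ∑ᶠ _ ∈ betaSet lam s ∩ Ici a, (1 : ℤ) = s - a := by
  obtain ⟨T, hT⟩ := lam.eventually_zero
  filter_upwards [eventually_le_atBot (s - T)] with a ha
  rw [finsum_mem_betaSet_inter_Ici hT ha, Finset.sum_const, Finset.card_range, nsmul_one]
  omega

lemma psize_eq_betaSum : (psize lam : ℤ) = betaSum (fun b => b) lam s := by
  obtain ⟨T, hT⟩ := lam.eventually_zero
  rw [psize, finsum_eq_sum_of_support_subset (s := Finset.range T), betaSum_eq_sum hT,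
    Nat.cast_sum]
  · exact Finset.sum_congr rfl fun x _ => by simp only [betaNum, zeroPart]; ring
  · intro x hx
    simp only [Function.mem_support, Finset.coe_range, mem_Iio] at hx ⊢
    by_contra! h
    exact hx (hT x h)

end PartitionSeq

open Finset in
lemma card_filter_range_modEq {e : ℕ} (he : 0 < e) (a J : ℤ) (n : ℕ) :
    (#{y ∈ Finset.range n | a + 1 + ((y : ℕ) : ℤ) ≡ J [ZMOD e]} : ℤ) =
      (a + n - J) / e - (a - J) / e := by
  have hbij : #{y ∈ Finset.range n | a + 1 + ((y : ℕ) : ℤ) ≡ J [ZMOD e]} =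
      #{x ∈ Finset.Ioc a (a + n) | x ≡ J [ZMOD e]} :=
    card_nbij' (fun y => a + 1 + y) (fun x => (x - a - 1).toNat)
      (fun y hy => by
        simp only [mem_coe, mem_filter, Finset.mem_range, Finset.mem_Ioc] at hy ⊢
        exact ⟨⟨by omega, by omega⟩, hy.2⟩)
      (fun x hx => by
        simp only [mem_coe, mem_filter, Finset.mem_range, Finset.mem_Ioc] at hx ⊢
        refine ⟨by omega, ?_⟩
        rw [Int.toNat_of_nonneg (by omega), show a + 1 + (x - a - 1) = x by ring]
        exact hx.2)
      (fun y _ => by simp only; omega)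
      (fun x hx => by simp only [mem_coe, mem_filter, Finset.mem_Ioc] at hx; simp only; omega)
  rw [hbij, Int.Ioc_filter_modEq_card _ _ (by exact_mod_cast he),
    show ((a + n : ℤ) : ℚ) - J = ((a + n - J : ℤ) : ℚ) by push_cast; ring,
    show ((a : ℤ) : ℚ) - J = ((a - J : ℤ) : ℚ) by push_cast; ring]
  simp only [Int.cast_natCast, Rat.floor_intCast_div_natCast]
  exact max_eq_left (sub_nonneg.2 (Int.ediv_le_ediv (by exact_mod_cast he) (by omega)))

open Finset in
lemma ncard_nodes_eq_sum (lam : PartitionSeq) (P : ℕ → ℕ → Prop) [∀ x, DecidablePred (P x)] {T : ℕ}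
    (hT : ∀ y, T ≤ y → lam.part y = 0) :
    {p : ℕ × ℕ | p.2 < lam.part p.1 ∧ P p.1 p.2}.ncard =
      ∑ x ∈ Finset.range T, #{y ∈ Finset.range (lam.part x) | P x y} := by
  have hset : {p : ℕ × ℕ | p.2 < lam.part p.1 ∧ P p.1 p.2} =
      ↑{p ∈ Finset.range T ×ˢ Finset.range (lam.part 0) | p.2 < lam.part p.1 ∧ P p.1 p.2} := by
    ext ⟨x, y⟩
    simp only [Set.mem_ofPred_eq, Finset.coe_filter, Finset.mem_product, Finset.mem_range]
    refine ⟨fun h => ⟨⟨?_, h.1.trans_le (lam.antitone 0 x x.zero_le)⟩, h⟩, fun h => h.2⟩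
    by_contra! hx
    exact absurd h.1 (by rw [hT x hx]; omega)
  rw [hset, ncard_coe_finset, Finset.card_filter, Finset.sum_product]
  refine Finset.sum_congr rfl fun x _ => ?_
  rw [← Finset.card_filter]
  congr 1
  ext y
  simp only [Finset.mem_filter, Finset.mem_range]
  have := lam.antitone 0 x x.zero_le
  constructor
  · rintro ⟨-, h, hP⟩
    exact ⟨h, hP⟩
  · rintro ⟨h, hP⟩
    exact ⟨by omega, h, hP⟩

noncomputable def chargedResCount (e : ℕ) (lam : PartitionSeq) (s : ℤ) (j : ZMod e) : ℕ :=
  {p : ℕ × ℕ | p.2 < lam.part p.1 ∧ ((s : ZMod e) + (p.2 : ZMod e) - (p.1 : ZMod e) = j)}.ncard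

lemma resCount_eq_chargedResCount (e : ℕ) (lam : PartitionSeq) (s : ℤ) (j : ZMod e) :
    resCount e lam j = chargedResCount e lam s (s + j) := by
  simp only [resCount, chargedResCount, add_sub_assoc, add_right_inj]

lemma chargedResCount_eq_betaSum {e : ℕ} (he : 0 < e) (lam : PartitionSeq) (s : ℤ) {j : ZMod e}
    {J : ℤ} (hJ : (J : ZMod e) = j) :
    (chargedResCount e lam s j : ℤ) = betaSum (fun b => (b - J) / e) lam s := by
  classical
  obtain ⟨T, hT⟩ := lam.eventually_zero
  rw [chargedResCount, ncard_nodes_eq_sum lam (fun x y => (s : ZMod e) + y - x = j) hT,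
    PartitionSeq.betaSum_eq_sum hT, Nat.cast_sum]
  refine Finset.sum_congr rfl fun x _ => ?_
  have hres : ∀ y : ℕ, (s : ZMod e) + y - x = j ↔ s - x - 1 + 1 + (y : ℤ) ≡ J [ZMOD e] := by
    intro y
    rw [← hJ, ← ZMod.intCast_eq_intCast_iff]
    push_cast
    ring_nf
  simp only [hres, card_filter_range_modEq he, betaNum, zeroPart]
  push_cast
  ring_nf

lemma MSimE.sum_betaSum_id {e r : ℕ} {lam mu : Fin r → PartitionSeq} {s : Fin r → ℤ}
    (h : MSimE e lam mu s) :
    ∑ k, betaSum (fun b => b) (lam k) (s k) = ∑ k, betaSum (fun b => b) (mu k) (s k) := by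
  simp only [← PartitionSeq.psize_eq_betaSum]
  exact_mod_cast h.1

lemma MSimE.sum_betaSum_ediv {e r : ℕ} (he : 0 < e) {lam mu : Fin r → PartitionSeq}
    {s : Fin r → ℤ} (h : MSimE e lam mu s) (J : ℤ) :
    ∑ k, betaSum (fun b => (b - J) / e) (lam k) (s k) =
      ∑ k, betaSum (fun b => (b - J) / e) (mu k) (s k) := by
  simp only [← chargedResCount_eq_betaSum he _ _ (rfl : (J : ZMod e) = J)]
  exact_mod_cast h.2 J

section UglovBetaSum

variable {e r : ℕ} {lam : Fin r → PartitionSeq} {s : Fin r → ℤ} {Λ : PartitionSeq} {S : ℤ}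

lemma charge_eq_sum (he : 0 < e) (hr : 0 < r)
    (hΛ : betaSet Λ S = uglovSet e r fun k => betaSet (lam k) (s k)) : S = ∑ k, s k := by
  have he' : (0 : ℤ) < e := by exact_mod_cast he
  have hre : (0 : ℤ) < r * e := by positivity
  obtain ⟨L, hUL, hL⟩ := (((Int.tendsto_const_mul_atBot hre).eventually
    (Λ.eventually_finsum_mem_one S)).and ((Int.tendsto_const_mul_atBot he').eventually
    (eventually_all.2 fun k => (lam k).eventually_finsum_mem_one (s k)))).exists
  have := finsum_mem_uglovSet_inter_Ici (B := fun k => betaSet (lam k) (s k)) he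
    (fun k => PartitionSeq.finite_betaSet_inter_Ici _ _ ((e : ℤ) * L)) fun _ => (1 : ℤ)
  rw [← hΛ, hUL] at this
  simp only [hL, Finset.sum_sub_distrib, Finset.sum_const, Finset.card_univ, Fintype.card_fin,
    nsmul_eq_mul] at this
  linarith

/-- The bracketed term depends on `s`, `S` and `L` only. -/
lemma eventually_betaSum_uglov (he : 0 < e) (hr : 0 < r)
    (hΛ : betaSet Λ S = uglovSet e r fun k => betaSet (lam k) (s k)) (G : ℤ → ℤ) :
    ∀ᶠ L in atBot, betaSum G Λ S =
      ∑ k : Fin r, betaSum (fun b => G (psi e r ((k : ℕ) + 1) b)) (lam k) (s k) +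
        (∑ k : Fin r, ∑ᶠ b ∈ betaSet zeroPart (s k) ∩ Ici (e * L), G (psi e r ((k : ℕ) + 1) b) -
          ∑ᶠ b ∈ betaSet zeroPart S ∩ Ici (r * e * L), G b) := by
  have he' : (0 : ℤ) < e := by exact_mod_cast he
  have hre : (0 : ℤ) < r * e := by positivity
  filter_upwards [(Int.tendsto_const_mul_atBot hre).eventually (Λ.eventually_betaSum_eq S G),
    (Int.tendsto_const_mul_atBot he').eventually (eventually_all.2 fun k =>
      (lam k).eventually_betaSum_eq (s k) fun b => G (psi e r ((k : ℕ) + 1) b))] with L hΛL hL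
  rw [hΛL, hΛ, finsum_mem_uglovSet_inter_Ici he
    (fun k => PartitionSeq.finite_betaSet_inter_Ici _ _ ((e : ℤ) * L)),
    Finset.sum_congr rfl fun k _ => hL k, Finset.sum_sub_distrib]
  ring

lemma betaSum_uglov_eq (he : 0 < e) (hr : 0 < r) {mu : Fin r → PartitionSeq} {Λ' : PartitionSeq}
    (hΛ : betaSet Λ S = uglovSet e r fun k => betaSet (lam k) (s k))
    (hΛ' : betaSet Λ' S = uglovSet e r fun k => betaSet (mu k) (s k))
    {G : ℤ → ℤ} {α : ℤ} {c : ℤ → ℤ} (hG : ∀ K b, G (psi e r K b) = G b + α * (b / e) + c K)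
    (hsum : ∑ k, betaSum G (lam k) (s k) = ∑ k, betaSum G (mu k) (s k))
    (hsum₀ : ∑ k, betaSum (· / (e : ℤ)) (lam k) (s k) =
      ∑ k, betaSum (· / (e : ℤ)) (mu k) (s k)) :
    betaSum G Λ S = betaSum G Λ' S := by
  have hψ : ∀ (nu : Fin r → PartitionSeq) (k : Fin r),
      betaSum (fun b => G (psi e r ((k : ℕ) + 1) b)) (nu k) (s k) =
        betaSum G (nu k) (s k) + α * betaSum (· / (e : ℤ)) (nu k) (s k) :=
    fun nu k => PartitionSeq.betaSum_affine α _ fun b => hG _ b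
  obtain ⟨L, hL, hL'⟩ := ((eventually_betaSum_uglov he hr hΛ G).and
    (eventually_betaSum_uglov he hr hΛ' G)).exists
  simp only [hψ, Finset.sum_add_distrib, ← Finset.mul_sum] at hL hL'
  rw [hL, hL', hsum, hsum₀]

lemma MSimE.charge_eq_and_simE_of_uglovSet (he : 0 < e) (hr : 0 < r)
    {mu : Fin r → PartitionSeq} {Λ' : PartitionSeq} {S' : ℤ} (h : MSimE e lam mu s)
    (hΛ : betaSet Λ S = uglovSet e r fun k => betaSet (lam k) (s k))
    (hΛ' : betaSet Λ' S' = uglovSet e r fun k => betaSet (mu k) (s k)) :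
    S = S' ∧ SimE e Λ Λ' := by
  obtain rfl : S = S' := (charge_eq_sum he hr hΛ).trans (charge_eq_sum he hr hΛ').symm
  have hsum₀ := h.sum_betaSum_ediv he 0
  simp only [sub_zero] at hsum₀
  refine ⟨rfl, ?_, fun j => ?_⟩
  · have := betaSum_uglov_eq he hr hΛ hΛ' (α := e * (r - 1)) (c := fun K => e * (r - K))
      (fun K b => by rw [psi_eq]; ring) h.sum_betaSum_id hsum₀
    rw [← Λ.psize_eq_betaSum, ← Λ'.psize_eq_betaSum] at this
    exact_mod_cast this
  · obtain ⟨J, hJ⟩ := ZMod.intCast_surjective ((S : ZMod e) + j)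
    have := betaSum_uglov_eq he hr hΛ hΛ' (α := r - 1) (c := fun K => r - K)
      (fun K b => psi_sub_ediv (e := e) (by exact_mod_cast he.ne') J) (h.sum_betaSum_ediv he J)
      hsum₀
    rw [← chargedResCount_eq_betaSum he _ _ hJ, ← chargedResCount_eq_betaSum he _ _ hJ] at this
    rw [resCount_eq_chargedResCount e Λ S, resCount_eq_chargedResCount e Λ' S]
    exact_mod_cast this

end UglovBetaSum

theorem stmt10 (e r : ℕ) (he : 2 ≤ e) (hr : 1 ≤ r)
    (lam mu : Fin r → PartitionSeq) (s : Fin r → ℤ)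
    (h : MSimE e lam mu s) :
    (partOfBeta (uglovSet e r fun k => betaSet (lam k) (s k))).2 =
      (partOfBeta (uglovSet e r fun k => betaSet (mu k) (s k))).2 ∧
    SimE e (partOfBeta (uglovSet e r fun k => betaSet (lam k) (s k))).1
      (partOfBeta (uglovSet e r fun k => betaSet (mu k) (s k))).1 := by
  have he' : 0 < e := by omega
  exact h.charge_eq_and_simE_of_uglovSet he' hr
    (isBetaSet_uglovSet he' hr fun k => (lam k).isBetaSet_betaSet (s k)).betaSet_partOfBeta
    (isBetaSet_uglovSet he' hr fun k => (mu k).isBetaSet_betaSet (s k)).betaSet_partOfBeta
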